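/- For each Schur stable matrix A ∈ ℝ^{d×d} (all eigenvalues of modulus < 1), there exist a symmetric positive definite P ∈ ℝ^{d×d} and λ ∈ (0,1) such that Aᵀ P A ≤ λ P (in the positive semidefinite order); equivalently, V(Ax) ≤ λ V(x) for all x, where V(x) = xᵀ P x. -/

import Mathlib

/-!
By Gelfand's formula, a Schur stable `A` satisfies `‖Aᵏ‖ ≤ νᵏ` for large `k`, for some `ν < 1`.
Hence the series `P = ∑ ν⁻ᵏ (Aᵏ)ᵀ Aᵏ` converges; it is positive definite since its `k = 0` term is
`1`, and shifting the index gives the Stein equation `P = 1 + ν⁻¹ Aᵀ P A`, i.e.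
`ν P - Aᵀ P A = ν • 1 ≥ 0`.
-/

open Matrix Filter
open scoped NNReal ComplexOrder

-- Submultiplicative, and both `ᴴ` and the entrywise embedding `ℝ → ℂ` are isometries.
attribute [local instance] Matrix.frobeniusNormedAddCommGroup Matrix.frobeniusNormedSpace
  Matrix.frobeniusNormedRing Matrix.frobeniusNormedAlgebra

theorem spectrum.spectralRadius_lt_of_forall_lt_of_pos {𝕜 A : Type*} [NormedField 𝕜]
    [ProperSpace 𝕜] [NormedRing A] [NormedAlgebra 𝕜 A] [CompleteSpace A] {a : A} {r : ℝ≥0}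
    (hr : 0 < r) (h : ∀ k ∈ spectrum 𝕜 a, ‖k‖₊ < r) : spectralRadius 𝕜 a < r := by
  rcases (spectrum 𝕜 a).eq_empty_or_nonempty with hempty | hne
  · simpa [spectralRadius, hempty] using hr
  · exact spectralRadius_lt_of_forall_lt_of_nonempty hne h

theorem spectrum.eventually_nnnorm_pow_le_of_spectralRadius_lt {A : Type*} [NormedRing A]
    [NormedAlgebra ℂ A] [CompleteSpace A] {a : A} {r : ℝ≥0} (h : spectralRadius ℂ a < r) :
    ∀ᶠ k : ℕ in atTop, ‖a ^ k‖₊ ≤ r ^ k := by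
  filter_upwards [(pow_nnnorm_pow_one_div_tendsto_nhds_spectralRadius a).eventually_lt_const h,
    eventually_ne_atTop 0] with k hk hk0
  have hk_inv_mul : (k : ℝ)⁻¹ * k = 1 := inv_mul_cancel₀ (Nat.cast_ne_zero.mpr hk0)
  have := ENNReal.rpow_le_rpow hk.le (Nat.cast_nonneg k : (0 : ℝ) ≤ k)
  rw [one_div, ← ENNReal.rpow_mul, hk_inv_mul, ENNReal.rpow_one, ENNReal.rpow_natCast] at this
  exact_mod_cast this

namespace Matrix

variable {n 𝕜 : Type*} [Fintype n]

theorem eventually_norm_pow_le_of_spectralRadius_lt [DecidableEq n] {A : Matrix n n ℝ}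
    {r : ℝ≥0} (h : spectralRadius ℂ (A.map (algebraMap ℝ ℂ)) < r) :
    ∀ᶠ k : ℕ in atTop, ‖A ^ k‖ ≤ r ^ k := by
  filter_upwards [spectrum.eventually_nnnorm_pow_le_of_spectralRadius_lt h] with k hk
  rw [← (algebraMap ℝ ℂ).mapMatrix_apply, ← map_pow, RingHom.mapMatrix_apply,
    ← NNReal.coe_le_coe, coe_nnnorm, frobenius_norm_map_eq _ _ fun x => by simp] at hk
  exact_mod_cast hk

variable [RCLike 𝕜]

theorem PosSemidef.of_hasSum {f : ℕ → Matrix n n 𝕜} {P : Matrix n n 𝕜}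
    (hP : HasSum f P) (hf : ∀ k, (f k).PosSemidef) : P.PosSemidef := by
  refine .of_dotProduct_mulVec_nonneg ?_ fun x => ?_
  · exact hP.matrix_conjTranspose.unique (by simpa only [(hf _).isHermitian.eq] using hP)
  · have hquad : HasSum (fun k => star x ⬝ᵥ (f k *ᵥ x)) (star x ⬝ᵥ (P *ᵥ x)) :=
      hP.map (AddMonoidHom.mk' (fun M : Matrix n n 𝕜 => star x ⬝ᵥ (M *ᵥ x))
        fun M N => by simp [add_mulVec, dotProduct_add])
        (continuous_const.dotProduct (continuous_id.matrix_mulVec continuous_const))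
    exact hquad.nonneg fun k => (hf k).dotProduct_mulVec_nonneg x

variable [DecidableEq n]

-- The sum over `k` solves the Stein equation `P = 1 + c • Aᴴ P A`.
def steinTerm (c : ℝ) (A : Matrix n n 𝕜) (k : ℕ) : Matrix n n 𝕜 :=
  c ^ k • ((A ^ k)ᴴ * A ^ k)

variable {c : ℝ} {A : Matrix n n 𝕜}

@[simp]
theorem steinTerm_zero : steinTerm c A 0 = 1 := by
  simp [steinTerm]

theorem steinTerm_succ (k : ℕ) : steinTerm c A (k + 1) = c • (Aᴴ * steinTerm c A k * A) := by
  simp only [steinTerm, pow_succ, conjTranspose_mul, mul_smul_comm, smul_mul_assoc, smul_smul,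
    Matrix.mul_assoc]
  rw [mul_comm c]

theorem posSemidef_steinTerm (hc : 0 ≤ c) (k : ℕ) : (steinTerm c A k).PosSemidef :=
  (posSemidef_conjTranspose_mul_self _).smul (pow_nonneg hc k)

theorem summable_steinTerm {ν : ℝ} (hc : 0 ≤ c) (hν : c * ν ^ 2 < 1)
    (hA : ∀ᶠ k : ℕ in atTop, ‖A ^ k‖ ≤ ν ^ k) : Summable (steinTerm c A) := by
  refine .of_norm_bounded_eventually_nat (summable_geometric_of_lt_one (by positivity) hν) ?_
  filter_upwards [hA] with k hk
  calc ‖steinTerm c A k‖ = c ^ k * ‖(A ^ k)ᴴ * A ^ k‖ := by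
        rw [steinTerm, norm_smul, Real.norm_of_nonneg (pow_nonneg hc k)]
    _ ≤ c ^ k * (‖A ^ k‖ * ‖A ^ k‖) := by
        grw [norm_mul_le, frobenius_norm_conjTranspose]
    _ ≤ c ^ k * (ν ^ k * ν ^ k) :=
        mul_le_mul_of_nonneg_left (mul_self_le_mul_self (norm_nonneg _) hk) (by positivity)
    _ = (c * ν ^ 2) ^ k := by ring

theorem tsum_steinTerm_eq (h : Summable (steinTerm c A)) :
    ∑' k, steinTerm c A k = 1 + c • (Aᴴ * (∑' k, steinTerm c A k) * A) := by
  conv_lhs => rw [h.tsum_eq_zero_add, steinTerm_zero]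
  simp_rw [steinTerm_succ]
  rw [((h.mul_left Aᴴ).mul_right A).tsum_const_smul, (h.mul_left Aᴴ).tsum_mul_right,
    h.tsum_mul_left]

theorem posDef_tsum_steinTerm (hc : 0 ≤ c) (h : Summable (steinTerm c A)) :
    (∑' k, steinTerm c A k).PosDef := by
  rw [h.tsum_eq_zero_add, steinTerm_zero]
  exact PosDef.one.add_posSemidef <| PosSemidef.of_hasSum
    ((summable_nat_add_iff 1).mpr h).hasSum fun k => posSemidef_steinTerm hc _

end Matrix

theorem stmt_16 {d : ℕ} (A : Matrix (Fin d) (Fin d) ℝ)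
    (hA : ∀ z ∈ spectrum ℂ (A.map (algebraMap ℝ ℂ)), ‖z‖ < 1) :
    ∃ (P : Matrix (Fin d) (Fin d) ℝ) (lam : ℝ), P.PosDef ∧ 0 < lam ∧ lam < 1 ∧
      (lam • P - Aᵀ * P * A).PosSemidef := by
  have hρ : spectralRadius ℂ (A.map (algebraMap ℝ ℂ)) < (1 : ℝ≥0) :=
    spectrum.spectralRadius_lt_of_forall_lt_of_pos one_pos fun z hz => by exact_mod_cast hA z hz
  obtain ⟨ν, hρν, hν⟩ := ENNReal.lt_iff_exists_nnreal_btwn.mp hρ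
  have hν0 : 0 < (ν : ℝ) := by exact_mod_cast zero_le.trans_lt hρν
  have hν1 : (ν : ℝ) < 1 := by exact_mod_cast hν
  have hsum : Summable (steinTerm (ν : ℝ)⁻¹ A) :=
    summable_steinTerm (inv_nonneg.mpr hν0.le)
      (by rwa [sq, ← mul_assoc, inv_mul_cancel₀ hν0.ne', one_mul])
      (eventually_norm_pow_le_of_spectralRadius_lt hρν)
  set P := ∑' k, steinTerm (ν : ℝ)⁻¹ A k
  have hstein : P = 1 + (ν : ℝ)⁻¹ • (Aᵀ * P * A) := by
    simpa only [conjTranspose_eq_transpose_of_trivial] using tsum_steinTerm_eq hsum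
  have hgap : (ν : ℝ) • P - Aᵀ * P * A = (ν : ℝ) • 1 := by
    rw [sub_eq_iff_eq_add]
    conv_lhs => rw [hstein]
    rw [smul_add, smul_smul, mul_inv_cancel₀ hν0.ne', one_smul]
  refine ⟨P, ν, posDef_tsum_steinTerm (inv_nonneg.mpr hν0.le) hsum, hν0, hν1, ?_⟩
  rw [hgap]
  exact PosSemidef.one.smul hν0.le
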